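/- arXiv:1202.2049 — 2 statements merged into one kernel-verified Lean document; each statement's English description precedes it below -/
import Mathlib

section
/- The normalized Eisenstein series satisfies the differential equation $q\frac{d}{dq}E_2(q) = \frac{E_2(q)^2 - E_4(q)}{12}$ as an identity of $q$-series. -/
/-!
Comparing coefficients of `qⁿ`, the identity says `12 ∑_{i+j=n} σ(i)σ(j) = 5σ₃(n) + σ(n) - 6nσ(n)`,
and the convolution is `∑ ab` over the solutions of `ax + by = n` in positive integers.
The map `(a, x, b, y) ↦ (a, x - y, a + b, y)` is a bijection from the solutions with `y < x` onto
those with `a < b`. Together with the symmetry `(a, x) ↔ (b, y)` it gives Liouville's identity: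
for every weight `w`, the sum over `a < b` of `w(a, b) + w(b, a) - w(a, b - a) - w(b - a, a)` is
the difference of the sums of `w` over the diagonals `x = y` and `a = b`, which are elementary
divisor sums. For `w = 2a² + ab` the left-hand summand is `4ab`.
-/

noncomputable section

/-- The normalized Eisenstein series of (even) weight `w` as a formal `q`-series:
`E_w = 1 - (2w/B_w) ∑_{n≥1} σ_{w-1}(n) qⁿ`. -/
def Epser (w : ℕ) : PowerSeries ℚ :=
  PowerSeries.mk fun n =>
    if n = 0 then 1 else -(2 * (w : ℚ) / bernoulli w) * (ArithmeticFunction.sigma (w - 1) n : ℚ)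

/-- The operator `q d/dq` on formal `q`-series. -/
def qD (f : PowerSeries ℚ) : PowerSeries ℚ :=
  PowerSeries.mk fun n => (n : ℚ) * PowerSeries.coeff n f

open Finset ArithmeticFunction Function
open scoped ArithmeticFunction.sigma

theorem Finset.sum_filter_comp_of_involutive {α M : Type*} [AddCommMonoid M] {s : Finset α}
    {g : α → α} (hg : Involutive g) (hs : ∀ a ∈ s, g a ∈ s) (P : α → Prop) [DecidablePred P]
    (f : α → M) : ∑ a ∈ s.filter P, f a = ∑ a ∈ s.filter (fun a => P (g a)), f (g a) :=
  sum_nbij' g g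
    (fun a ha => by simp only [mem_filter, hg a] at ha ⊢; exact ⟨hs a ha.1, ha.2⟩)
    (fun a ha => by simp only [mem_filter] at ha ⊢; exact ⟨hs a ha.1, ha.2⟩)
    (fun a _ => hg a) (fun a _ => hg a) (fun a _ => by rw [hg])

theorem Finset.sum_filter_lt_add_sum_filter_eq_add_sum_filter_gt {α β M : Type*}
    [AddCommMonoid M] [LinearOrder β] (s : Finset α) (u v : α → β) (f : α → M) :
    ∑ a ∈ s.filter (fun a => u a < v a), f a + ∑ a ∈ s.filter (fun a => u a = v a), f a
      + ∑ a ∈ s.filter (fun a => v a < u a), f a = ∑ a ∈ s, f a := by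
  simp only [sum_filter, ← sum_add_distrib]
  refine sum_congr rfl fun a _ => ?_
  rcases lt_trichotomy (u a) (v a) with h | h | h
  · simp [h, h.ne, h.not_gt]
  · simp [h]
  · simp [h, h.ne', h.not_gt]

def divisorPairs (n : ℕ) : Finset ((ℕ × ℕ) × (ℕ × ℕ)) :=
  (antidiagonal n).biUnion fun m => m.1.divisorsAntidiagonal ×ˢ m.2.divisorsAntidiagonal

theorem mem_divisorPairs {n a x b y : ℕ} :
    ((a, x), (b, y)) ∈ divisorPairs n ↔ a * x + b * y = n ∧ a ≠ 0 ∧ x ≠ 0 ∧ b ≠ 0 ∧ y ≠ 0 := by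
  simp only [divisorPairs, mem_biUnion, Finset.HasAntidiagonal.mem_antidiagonal, mem_product,
    Nat.mem_divisorsAntidiagonal, Prod.exists]
  constructor
  · rintro ⟨_, _, rfl, ⟨rfl, h₁⟩, rfl, h₂⟩
    simp_all
  · rintro ⟨rfl, ha, hx, hb, hy⟩
    exact ⟨_, _, rfl, ⟨rfl, by positivity⟩, rfl, by positivity⟩

theorem sum_divisorPairs_eq_sum_antidiagonal {M : Type*} [AddCommMonoid M] (n : ℕ)
    (f : (ℕ × ℕ) × (ℕ × ℕ) → M) :
    ∑ q ∈ divisorPairs n, f q = ∑ m ∈ antidiagonal n,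
      ∑ q ∈ m.1.divisorsAntidiagonal ×ˢ m.2.divisorsAntidiagonal, f q := by
  refine sum_biUnion fun m _ m' _ hm => disjoint_left.2 fun q hq hq' => hm ?_
  simp only [mem_product, Nat.mem_divisorsAntidiagonal] at hq hq'
  exact Prod.ext (hq.1.1.symm.trans hq'.1.1) (hq.2.1.symm.trans hq'.2.1)

theorem swap_mem_divisorPairs {n : ℕ} {q : (ℕ × ℕ) × (ℕ × ℕ)} (hq : q ∈ divisorPairs n) :
    q.swap ∈ divisorPairs n := by
  obtain ⟨⟨a, x⟩, b, y⟩ := q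
  simp only [Prod.swap_prod_mk, mem_divisorPairs] at hq ⊢
  omega

theorem prodMap_swap_mem_divisorPairs {n : ℕ} {q : (ℕ × ℕ) × (ℕ × ℕ)}
    (hq : q ∈ divisorPairs n) : Prod.map Prod.swap Prod.swap q ∈ divisorPairs n := by
  obtain ⟨⟨a, x⟩, b, y⟩ := q
  simp only [Prod.map_apply, Prod.swap_prod_mk, mem_divisorPairs] at hq ⊢
  obtain ⟨h, ha, hx, hb, hy⟩ := hq
  exact ⟨by rw [← h]; ring, hx, ha, hy, hb⟩

section

variable {M : Type*} [AddCommMonoid M] (n : ℕ)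

theorem sum_divisorPairs_filter_y_lt_x (w : ℕ → ℕ → M) :
    ∑ q ∈ (divisorPairs n).filter (fun q => q.2.2 < q.1.2), w q.1.1 q.2.1 =
      ∑ q ∈ (divisorPairs n).filter (fun q => q.1.1 < q.2.1), w q.1.1 (q.2.1 - q.1.1) := by
  refine sum_nbij' (fun q => ((q.1.1, q.1.2 - q.2.2), (q.1.1 + q.2.1, q.2.2)))
    (fun q => ((q.1.1, q.1.2 + q.2.2), (q.2.1 - q.1.1, q.2.2))) ?_ ?_ ?_ ?_ ?_
  · rintro ⟨⟨a, x⟩, b, y⟩ hq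
    simp only [mem_filter, mem_divisorPairs] at hq ⊢
    obtain ⟨⟨rfl, ha, hx, hb, hy⟩, hyx⟩ := hq
    obtain ⟨d, rfl⟩ := Nat.exists_eq_add_of_lt hyx
    refine ⟨⟨?_, ha, by omega, by omega, hy⟩, by omega⟩
    rw [show y + d + 1 - y = d + 1 by omega]
    ring
  · rintro ⟨⟨a, x⟩, b, y⟩ hq
    simp only [mem_filter, mem_divisorPairs] at hq ⊢
    obtain ⟨⟨rfl, ha, hx, hb, hy⟩, hab⟩ := hq
    obtain ⟨d, rfl⟩ := Nat.exists_eq_add_of_lt hab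
    refine ⟨⟨?_, ha, by omega, by omega, hy⟩, by omega⟩
    rw [show a + d + 1 - a = d + 1 by omega]
    ring
  · rintro ⟨⟨a, x⟩, b, y⟩ hq
    simp only [mem_filter, mem_divisorPairs, Prod.mk.injEq, true_and, and_true] at hq ⊢
    omega
  · rintro ⟨⟨a, x⟩, b, y⟩ hq
    simp only [mem_filter, mem_divisorPairs, Prod.mk.injEq, true_and, and_true] at hq ⊢
    omega
  · rintro ⟨⟨a, x⟩, b, y⟩ -
    simp

theorem sum_divisorPairs_filter_x_eq_y (f : (ℕ × ℕ) × (ℕ × ℕ) → M) :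
    ∑ q ∈ (divisorPairs n).filter (fun q => q.1.2 = q.2.2), f q =
      ∑ p ∈ n.divisorsAntidiagonal, ∑ a ∈ Ioo 0 p.1, f ((a, p.2), (p.1 - a, p.2)) := by
  rw [sum_sigma']
  refine sum_nbij' (fun q => ⟨(q.1.1 + q.2.1, q.1.2), q.1.1⟩)
    (fun s => ((s.2, s.1.2), (s.1.1 - s.2, s.1.2))) ?_ ?_ ?_ ?_ ?_
  · rintro ⟨⟨a, x⟩, b, y⟩ hq
    simp only [mem_filter, mem_divisorPairs] at hq
    obtain ⟨⟨rfl, ha, hx, hb, hy⟩, rfl⟩ := hq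
    simp only [mem_sigma, Nat.mem_divisorsAntidiagonal, mem_Ioo]
    exact ⟨⟨by ring, by positivity⟩, by omega, by omega⟩
  · rintro ⟨⟨e, x⟩, a⟩ hs
    simp only [mem_sigma, Nat.mem_divisorsAntidiagonal, mem_Ioo] at hs
    obtain ⟨⟨rfl, he⟩, ha, hae⟩ := hs
    obtain ⟨d, rfl⟩ := Nat.exists_eq_add_of_lt hae
    simp only [mem_filter, mem_divisorPairs]
    refine ⟨⟨?_, by omega, by simp_all, by omega, by simp_all⟩, trivial⟩
    rw [show a + d + 1 - a = d + 1 by omega]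
    ring
  · rintro ⟨⟨a, x⟩, b, y⟩ hq
    simp only [mem_filter, mem_divisorPairs] at hq
    obtain ⟨-, rfl⟩ := hq
    simp
  · rintro ⟨⟨e, x⟩, a⟩ hs
    simp only [mem_sigma, mem_Ioo] at hs
    simp only [Sigma.mk.injEq, Prod.mk.injEq, heq_eq_eq, and_true]
    omega
  · rintro ⟨⟨a, x⟩, b, y⟩ hq
    simp only [mem_filter, mem_divisorPairs] at hq
    obtain ⟨-, rfl⟩ := hq
    simp

theorem sum_divisorPairs_split_a_b (w : ℕ → ℕ → M) :
    ∑ q ∈ divisorPairs n, w q.1.1 q.2.1 =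
      ∑ q ∈ (divisorPairs n).filter (fun q => q.1.1 < q.2.1), (w q.1.1 q.2.1 + w q.2.1 q.1.1)
        + ∑ q ∈ (divisorPairs n).filter (fun q => q.1.1 = q.2.1), w q.1.1 q.2.1 := by
  have hgt := sum_filter_comp_of_involutive Prod.swap_swap
    (fun _ => swap_mem_divisorPairs (n := n)) (fun q => q.2.1 < q.1.1) (fun q => w q.1.1 q.2.1)
  rw [← sum_filter_lt_add_sum_filter_eq_add_sum_filter_gt _ (fun q => q.1.1) (fun q => q.2.1),
    hgt, sum_add_distrib]
  simp only [Prod.fst_swap, Prod.snd_swap]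
  abel

theorem sum_divisorPairs_split_x_y (w : ℕ → ℕ → M) :
    ∑ q ∈ divisorPairs n, w q.1.1 q.2.1 =
      ∑ q ∈ (divisorPairs n).filter (fun q => q.1.1 < q.2.1),
          (w q.1.1 (q.2.1 - q.1.1) + w (q.2.1 - q.1.1) q.1.1)
        + ∑ q ∈ (divisorPairs n).filter (fun q => q.1.2 = q.2.2), w q.1.1 q.2.1 := by
  have hlt := sum_filter_comp_of_involutive Prod.swap_swap
    (fun _ => swap_mem_divisorPairs (n := n)) (fun q => q.1.2 < q.2.2) (fun q => w q.1.1 q.2.1)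
  simp only [Prod.fst_swap, Prod.snd_swap] at hlt
  rw [← sum_filter_lt_add_sum_filter_eq_add_sum_filter_gt _ (fun q => q.1.2) (fun q => q.2.2),
    hlt, sum_divisorPairs_filter_y_lt_x, sum_divisorPairs_filter_y_lt_x n (fun a b => w b a),
    sum_add_distrib]
  abel

end

theorem sum_divisorPairs_liouville {G : Type*} [AddCommGroup G] (n : ℕ) (w : ℕ → ℕ → G) :
    ∑ q ∈ (divisorPairs n).filter (fun q => q.1.1 < q.2.1),
        ((w q.1.1 q.2.1 + w q.2.1 q.1.1) - (w q.1.1 (q.2.1 - q.1.1) + w (q.2.1 - q.1.1) q.1.1))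
      = ∑ q ∈ (divisorPairs n).filter (fun q => q.1.2 = q.2.2), w q.1.1 q.2.1
        - ∑ q ∈ (divisorPairs n).filter (fun q => q.1.1 = q.2.1), w q.1.1 q.2.1 := by
  rw [sum_sub_distrib, sub_eq_sub_iff_add_eq_add, ← sum_divisorPairs_split_a_b, add_comm,
    ← sum_divisorPairs_split_x_y]

theorem two_mul_sum_divisorPairs_mul (n : ℕ) :
    2 * ∑ q ∈ divisorPairs n, (q.1.1 : ℚ) * q.2.1 =
      ∑ q ∈ (divisorPairs n).filter (fun q => q.1.2 = q.2.2), (2 * (q.1.1 : ℚ) ^ 2 + q.1.1 * q.2.1)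
        - ∑ q ∈ (divisorPairs n).filter (fun q => q.1.1 = q.2.1), (q.1.1 : ℚ) * q.2.1 := by
  have hsplit := sum_divisorPairs_split_a_b n (fun a b => (a : ℚ) * b)
  have hliouville := sum_divisorPairs_liouville n (fun a b => 2 * (a : ℚ) ^ 2 + a * b)
  have hsym : ∑ q ∈ (divisorPairs n).filter (fun q => q.1.1 < q.2.1),
      ((q.1.1 : ℚ) * q.2.1 + q.2.1 * q.1.1) =
        2 * ∑ q ∈ (divisorPairs n).filter (fun q => q.1.1 < q.2.1), (q.1.1 : ℚ) * q.2.1 := by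
    rw [mul_sum]
    exact sum_congr rfl fun _ _ => by ring
  have hlt : ∑ q ∈ (divisorPairs n).filter (fun q => q.1.1 < q.2.1),
      ((2 * (q.1.1 : ℚ) ^ 2 + q.1.1 * q.2.1 + (2 * (q.2.1 : ℚ) ^ 2 + q.2.1 * q.1.1)) -
        (2 * (q.1.1 : ℚ) ^ 2 + q.1.1 * ((q.2.1 - q.1.1 : ℕ) : ℚ)
          + (2 * ((q.2.1 - q.1.1 : ℕ) : ℚ) ^ 2 + ((q.2.1 - q.1.1 : ℕ) : ℚ) * q.1.1))) =
        4 * ∑ q ∈ (divisorPairs n).filter (fun q => q.1.1 < q.2.1), (q.1.1 : ℚ) * q.2.1 := by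
    rw [mul_sum]
    refine sum_congr rfl fun q hq => ?_
    rw [Nat.cast_sub (mem_filter.1 hq).2.le]
    ring
  have hdiag : ∑ q ∈ (divisorPairs n).filter (fun q => q.1.1 = q.2.1),
      (2 * (q.1.1 : ℚ) ^ 2 + q.1.1 * q.2.1) =
        3 * ∑ q ∈ (divisorPairs n).filter (fun q => q.1.1 = q.2.1), (q.1.1 : ℚ) * q.2.1 := by
    rw [mul_sum]
    refine sum_congr rfl fun q hq => ?_
    rw [(mem_filter.1 hq).2]
    ring
  rw [hlt, hdiag] at hliouville
  rw [hsplit, hsym]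
  linear_combination hliouville

theorem sum_Ioo_zero_eq_sum_range {M : Type*} [AddCommMonoid M] {f : ℕ → M} (hf : f 0 = 0)
    (e : ℕ) : ∑ a ∈ Ioo 0 e, f a = ∑ a ∈ range e, f a :=
  sum_subset (fun a ha => by simp only [mem_Ioo, mem_range] at ha ⊢; omega)
    fun a _ ha => by
      obtain rfl : a = 0 := by simp only [mem_Ioo, mem_range] at *; omega
      exact hf

theorem sum_range_natCast (e : ℕ) : ∑ a ∈ range e, (a : ℚ) = e * (e - 1) / 2 := by
  induction e with
  | zero => simp
  | succ e ih => rw [sum_range_succ, ih]; push_cast; ring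

theorem sum_range_natCast_sq (e : ℕ) :
    ∑ a ∈ range e, (a : ℚ) ^ 2 = e * (e - 1) * (2 * e - 1) / 6 := by
  induction e with
  | zero => simp
  | succ e ih => rw [sum_range_succ, ih]; push_cast; ring

theorem sum_Ioo_two_mul_sq_add_mul_sub (e : ℕ) :
    ∑ a ∈ Ioo 0 e, (2 * (a : ℚ) ^ 2 + a * ((e - a : ℕ) : ℚ)) =
      (e : ℚ) * (e - 1) * (5 * e - 1) / 6 := by
  rw [sum_Ioo_zero_eq_sum_range (by simp)]
  calc ∑ a ∈ range e, (2 * (a : ℚ) ^ 2 + a * ((e - a : ℕ) : ℚ))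
      = ∑ a ∈ range e, ((a : ℚ) ^ 2 + e * a) :=
        sum_congr rfl fun a ha => by rw [Nat.cast_sub (mem_range.1 ha).le]; ring
    _ = e * (e - 1) * (5 * e - 1) / 6 := by
        rw [sum_add_distrib, ← mul_sum, sum_range_natCast, sum_range_natCast_sq]; ring

theorem natCast_sigma (k n : ℕ) : ((σ k n : ℕ) : ℚ) = ∑ d ∈ n.divisors, (d : ℚ) ^ k := by
  simp [sigma_apply]

theorem sum_divisorPairs_filter_x_eq_y_two_mul_sq_add_mul (n : ℕ) :
    ∑ q ∈ (divisorPairs n).filter (fun q => q.1.2 = q.2.2), (2 * (q.1.1 : ℚ) ^ 2 + q.1.1 * q.2.1)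
      = (5 * (σ 3 n : ℚ) - 6 * σ 2 n + σ 1 n) / 6 := by
  rw [sum_divisorPairs_filter_x_eq_y n (fun q => 2 * (q.1.1 : ℚ) ^ 2 + q.1.1 * q.2.1)]
  simp only [sum_Ioo_two_mul_sq_add_mul_sub]
  rw [Nat.sum_divisorsAntidiagonal (fun e _ => (e : ℚ) * (e - 1) * (5 * e - 1) / 6),
    natCast_sigma, natCast_sigma, natCast_sigma, mul_sum, mul_sum, ← sum_sub_distrib,
    ← sum_add_distrib, sum_div]
  exact sum_congr rfl fun d _ => by ring

theorem sum_divisorPairs_filter_a_eq_b_mul (n : ℕ) :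
    ∑ q ∈ (divisorPairs n).filter (fun q => q.1.1 = q.2.1), (q.1.1 : ℚ) * q.2.1
      = (n : ℚ) * σ 1 n - σ 2 n := by
  rw [sum_filter_comp_of_involutive (Involutive.prodMap Prod.swap_swap Prod.swap_swap)
    (fun _ => prodMap_swap_mem_divisorPairs (n := n))]
  simp only [Prod.map_fst, Prod.map_snd, Prod.fst_swap]
  rw [sum_divisorPairs_filter_x_eq_y n (fun q => (q.1.2 : ℚ) * q.2.2)]
  calc ∑ p ∈ n.divisorsAntidiagonal, ∑ _a ∈ Ioo 0 p.1, (p.2 : ℚ) * p.2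
      = ∑ p ∈ n.divisorsAntidiagonal, ((n : ℚ) * p.2 - p.2 ^ 2) := by
        refine sum_congr rfl fun p hp => ?_
        obtain ⟨hpn, hn⟩ := Nat.mem_divisorsAntidiagonal.1 hp
        have hp1 : 1 ≤ p.1 := Nat.pos_of_ne_zero (left_ne_zero_of_mul (hpn ▸ hn))
        rw [sum_const, Nat.card_Ioo, nsmul_eq_mul, ← hpn, Nat.sub_zero, Nat.cast_sub hp1]
        push_cast
        ring
    _ = (n : ℚ) * σ 1 n - σ 2 n := by
        rw [Nat.sum_divisorsAntidiagonal' (fun _ x => (n : ℚ) * x - x ^ 2), natCast_sigma,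
          natCast_sigma, mul_sum, ← sum_sub_distrib]
        simp

theorem twelve_mul_sum_divisorPairs_mul (n : ℕ) :
    12 * ∑ q ∈ divisorPairs n, (q.1.1 : ℚ) * q.2.1 = 5 * σ 3 n + σ 1 n - 6 * n * σ 1 n := by
  linear_combination 6 * two_mul_sum_divisorPairs_mul n
    + 6 * sum_divisorPairs_filter_x_eq_y_two_mul_sq_add_mul n
    - 6 * sum_divisorPairs_filter_a_eq_b_mul n

open PowerSeries

def sigmaSeries (k : ℕ) : PowerSeries ℚ :=
  mk fun n => (σ k n : ℚ)

theorem coeff_sigmaSeries_one_sq (n : ℕ) :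
    coeff n (sigmaSeries 1 ^ 2) = ∑ q ∈ divisorPairs n, (q.1.1 : ℚ) * q.2.1 := by
  have hσ (m : ℕ) : (σ 1 m : ℚ) = ∑ p ∈ m.divisorsAntidiagonal, (p.1 : ℚ) := by
    rw [Nat.sum_divisorsAntidiagonal (fun d _ => (d : ℚ)), natCast_sigma]
    simp
  rw [sq, coeff_mul, sum_divisorPairs_eq_sum_antidiagonal]
  refine sum_congr rfl fun m _ => ?_
  rw [sigmaSeries, coeff_mk, coeff_mk, hσ, hσ, sum_mul_sum, sum_product]

theorem sigmaSeries_one_sq : (12 : ℚ) • sigmaSeries 1 ^ 2 =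
    (5 : ℚ) • sigmaSeries 3 + sigmaSeries 1 - (6 : ℚ) • qD (sigmaSeries 1) := by
  ext n
  rw [map_sub, map_add, coeff_smul, coeff_smul, coeff_smul, smul_eq_mul,
    coeff_sigmaSeries_one_sq, twelve_mul_sum_divisorPairs_mul]
  simp only [qD, sigmaSeries, coeff_mk, smul_eq_mul]
  ring

theorem Epser_eq (w : ℕ) : Epser w = 1 - (2 * w / bernoulli w : ℚ) • sigmaSeries (w - 1) := by
  ext n
  rcases eq_or_ne n 0 with rfl | hn
  · simp [Epser, sigmaSeries]
  · simp [Epser, sigmaSeries, hn]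

theorem Epser_two : Epser 2 = 1 - (24 : ℚ) • sigmaSeries 1 := by
  rw [Epser_eq, bernoulli_two]
  norm_num

theorem Epser_four : Epser 4 = 1 + (240 : ℚ) • sigmaSeries 3 := by
  rw [Epser_eq, bernoulli_eq_bernoulli'_of_ne_one (by norm_num), bernoulli'_four]
  norm_num

theorem qD_one_sub_smul (c : ℚ) (f : PowerSeries ℚ) : qD (1 - c • f) = -(c • qD f) := by
  ext n
  rcases eq_or_ne n 0 with rfl | hn
  · simp [qD]
  · simp [qD, coeff_one, hn]
    ring

/-- `q d/dq E₂ = (E₂² - E₄)/12`. -/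
theorem qD_E2 : qD (Epser 2) = (1 / 12 : ℚ) • ((Epser 2) ^ 2 - Epser 4) := by
  have hsq : (1 - (24 : ℚ) • sigmaSeries 1) ^ 2
      = 1 - (48 : ℚ) • sigmaSeries 1 + (576 : ℚ) • sigmaSeries 1 ^ 2 := by
    simp only [sq, sub_mul, mul_sub, one_mul, mul_one, smul_mul_smul_comm]
    module
  rw [Epser_two, qD_one_sub_smul, hsq, Epser_four]
  linear_combination (norm := module) (-4 : ℚ) • sigmaSeries_one_sq
end
end

section
/- The Dedekind eta function satisfies $\eta(\tau)^3 = \theta'(0,\tau)$, where $\theta'$ denotes the derivative of the Jacobi theta function $\theta(z,\tau)$ with respect to $z$. -/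
/-!
Write `q = e^{2πiτ}` and `E(z) = ∏_{n≥1} (1 - qⁿeᶻ)`, so that
`θ(z) = 2 q^{1/8} sinh(z/2) E(z) E(-z) E(0)`. For `|q| < 1` the product defining `E` converges
locally uniformly, hence `E` is entire. Since `sinh(0) = 0`, the product rule leaves only
`θ'(0) = q^{1/8} E(0)³ = (q^{1/24} ∏ (1 - qⁿ))³ = η³`.
-/

open Complex

noncomputable section

/-- `q = e^{2πiτ}`. -/
def qnome (τ : ℂ) : ℂ := Complex.exp (2 * (Real.pi : ℂ) * I * τ)

/-- The Jacobi theta function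
`θ(z,q) = 2 q^{1/8} sinh(z/2) ∏_{n≥1} (1-qⁿeᶻ)(1-qⁿe⁻ᶻ)(1-qⁿ)`. -/
def jacobiTheta1 (z τ : ℂ) : ℂ :=
  2 * Complex.exp (2 * (Real.pi : ℂ) * I * τ / 8) * Complex.sinh (z / 2) *
    ∏' n : ℕ, ((1 - qnome τ ^ (n + 1) * Complex.exp z) *
      (1 - qnome τ ^ (n + 1) * Complex.exp (-z)) * (1 - qnome τ ^ (n + 1)))

/-- The Dedekind eta function `η(q) = q^{1/24} ∏_{n≥1} (1-qⁿ)`. -/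
def dedekindEta (τ : ℂ) : ℂ :=
  Complex.exp (2 * (Real.pi : ℂ) * I * τ / 24) * ∏' n : ℕ, (1 - qnome τ ^ (n + 1))

lemma norm_qnome_lt_one {τ : ℂ} (hτ : 0 < τ.im) : ‖qnome τ‖ < 1 := by
  rw [qnome, norm_exp, Real.exp_lt_one_iff]
  have hre : (2 * (Real.pi : ℂ) * I * τ).re = -(2 * Real.pi * τ.im) := by simp [mul_re, mul_im]
  rw [hre]
  linarith [mul_pos Real.pi_pos hτ]

section

variable {q : ℂ}

lemma summable_pow_succ_mul (hq : ‖q‖ < 1) (c : ℂ) :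
    Summable fun n : ℕ => q ^ (n + 1) * c :=
  ((summable_geometric_of_norm_lt_one hq).mul_left (q * c)).congr fun n => by ring

lemma multipliable_one_sub_pow_mul (hq : ‖q‖ < 1) (c : ℂ) :
    Multipliable fun n : ℕ => 1 - q ^ (n + 1) * c := by
  simpa [sub_eq_add_neg] using
    Complex.multipliable_one_add_of_summable (summable_pow_succ_mul hq c).neg

lemma differentiable_tprod_one_sub_pow_mul_cexp (hq : ‖q‖ < 1) :
    Differentiable ℂ fun z => ∏' n : ℕ, (1 - q ^ (n + 1) * cexp z) := by
  intro z
  have hprod : HasProdLocallyUniformlyOn (fun n w => 1 + -(q ^ (n + 1) * cexp w))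
      (fun w => ∏' n : ℕ, (1 + -(q ^ (n + 1) * cexp w))) (Metric.ball 0 (‖z‖ + 1)) := by
    refine (summable_pow_succ_mul hq (Real.exp (‖z‖ + 1))).norm
      |>.hasProdLocallyUniformlyOn_nat_one_add Metric.isOpen_ball
        (.of_forall fun n w hw => ?_) (fun _ => by fun_prop)
    rw [norm_neg, norm_mul, norm_mul, norm_exp, norm_real, Real.norm_of_nonneg (Real.exp_pos _).le]
    gcongr
    exact (re_le_norm w).trans (mem_ball_zero_iff.mp hw).le
  have hdiff := hprod.differentiableOn (.of_forall fun s => by fun_prop) Metric.isOpen_ball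
  simpa [sub_eq_add_neg] using hdiff.differentiableAt (Metric.isOpen_ball.mem_nhds (by simp))

end

lemma jacobiTheta1_eq_mul_tprod {τ : ℂ} (hτ : 0 < τ.im) (z : ℂ) :
    jacobiTheta1 z τ = 2 * cexp (2 * Real.pi * I * τ / 8) * sinh (z / 2) *
      ((∏' n : ℕ, (1 - qnome τ ^ (n + 1) * cexp z)) *
        (∏' n : ℕ, (1 - qnome τ ^ (n + 1) * cexp (-z))) *
          ∏' n : ℕ, (1 - qnome τ ^ (n + 1))) := by
  have hq := norm_qnome_lt_one hτ
  rw [jacobiTheta1, ← (multipliable_one_sub_pow_mul hq _).tprod_mul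
      (multipliable_one_sub_pow_mul hq _),
    ← ((multipliable_one_sub_pow_mul hq _).mul (multipliable_one_sub_pow_mul hq _)).tprod_mul
      (by simpa using multipliable_one_sub_pow_mul hq 1)]

lemma HasDerivAt.mul_of_eq_zero {𝕜 𝔸 : Type*} [NontriviallyNormedField 𝕜] [NormedRing 𝔸]
    [NormedAlgebra 𝕜 𝔸] {f g : 𝕜 → 𝔸} {f' : 𝔸} {x : 𝕜} (hf : HasDerivAt f f' x)
    (hfx : f x = 0) (hg : DifferentiableAt 𝕜 g x) : HasDerivAt (f * g) (f' * g x) x := by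
  simpa [hfx] using hf.mul hg.hasDerivAt

/-- `η(τ)³ = θ'(0,τ)`, the derivative of the Jacobi theta function in `z`. -/
theorem eta_cubed_eq_theta_deriv :
    ∀ τ : ℂ, 0 < τ.im → dedekindEta τ ^ 3 = deriv (fun z => jacobiTheta1 z τ) 0 := by
  intro τ hτ
  set E : ℂ → ℂ := fun z => ∏' n : ℕ, (1 - qnome τ ^ (n + 1) * cexp z) with hE
  have hEd : Differentiable ℂ E :=
    differentiable_tprod_one_sub_pow_mul_cexp (norm_qnome_lt_one hτ)
  have hsinh : HasDerivAt (fun z => 2 * cexp (2 * Real.pi * I * τ / 8) * sinh (z / 2))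
      (2 * cexp (2 * Real.pi * I * τ / 8) * (1 / 2)) 0 := by
    simpa using ((hasDerivAt_id (0 : ℂ)).div_const 2).csinh.const_mul
      (2 * cexp (2 * Real.pi * I * τ / 8))
  have hderiv : HasDerivAt (fun z => jacobiTheta1 z τ) (2 * cexp (2 * Real.pi * I * τ / 8) *
      (1 / 2) * (E 0 * E (-0) * ∏' n : ℕ, (1 - qnome τ ^ (n + 1)))) 0 := by
    rw [funext (jacobiTheta1_eq_mul_tprod hτ)]
    exact hsinh.mul_of_eq_zero (by simp)
      (((hEd 0).mul (hEd.comp differentiable_neg 0)).mul_const _)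
  have hexp : ((3 : ℕ) : ℂ) * (2 * Real.pi * I * τ / 24) = 2 * Real.pi * I * τ / 8 := by
    push_cast
    ring
  rw [hderiv.deriv, dedekindEta, mul_pow, ← exp_nat_mul, hexp]
  simp only [hE, neg_zero, exp_zero, mul_one]
  ring
end
end
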